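/- For every x ∈ ℝ³ with B(x,x) = 1, x₁ > 0, and B(Mⁿx, c) ≠ 0 for every integer n, there exists a unique integer n such that B(Mⁿx, c) > 0 and B(M^{n+1}x, c) < 0. (In the paper: for any generic starting point ω(h₀) on the hyperboloid, there is a unique n for which the nth iterate under the parabolic transformation induced by f lies on one side of the wall W and the (n+1)st iterate lies on the other side; this is the key step in showing SW_tot(f,Γ) = SW(Γ_X).) -/

import Mathlib

/-- The intersection form of `N = CP² # (−CP²) # (−CP²)` in the basis `S, E₁, E₂`:
`B x y = x₁y₁ − x₂y₂ − x₃y₃`. -/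
def interForm (x y : Fin 3 → ℝ) : ℝ := x 0 * y 0 - x 1 * y 1 - x 2 * y 2

/-- The matrix of `f_* = (ρ_{Σ₊} ∘ ρ_{Σ₋})_*` on `H₂(N)`. -/
noncomputable def M : Matrix (Fin 3) (Fin 3) ℝ := !![9, 4, -8; 4, 1, -4; 8, 4, -7]

/-- The coordinate vector `c = (1,1,1)` of the Poincaré dual of `c₁(Γ_N) = s + e₁ + e₂`. -/
def c : Fin 3 → ℝ := ![1, 1, 1]

open Matrix

/-!
`M` is parabolic: it fixes the isotropic vector `v = (1, 0, 1)`, so `ℓ(y) = B(y, v) = y₁ − y₃`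
is `M`-invariant and `B(My, c) = B(y, c) − 4ℓ(y)`. Hence `n ↦ B(Mⁿx, c)` is affine in `n`
with slope `−4ℓ(x)`, which is negative because `x` lies on the upper sheet of the hyperboloid.
A strictly decreasing affine function that misses `0` on `ℤ` changes sign exactly once,
at the floor of its real zero.
-/

section AffineDrift

variable {ι R β : Type*} [Fintype ι] [DecidableEq ι] [CommRing R] [AddCommGroup β]
  {A : Matrix ι ι R}

theorem Matrix.apply_zpow_mulVec_of_apply_mulVec (hA : IsUnit A.det)
    {φ ψ : (ι → R) → β} (hψ : ∀ y, ψ (A *ᵥ y) = ψ y) (hφ : ∀ y, φ (A *ᵥ y) = φ y + ψ y)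
    (n : ℤ) (y : ι → R) : φ (A ^ n *ᵥ y) = φ y + n • ψ y := by
  induction n using Int.induction_on generalizing y with
  | zero => simp
  | succ n ih =>
    rw [Matrix.zpow_add_one hA, ← Matrix.mulVec_mulVec, ih, hφ, hψ, add_smul, one_smul]
    abel
  | pred n ih =>
    have hAinv : A *ᵥ (A⁻¹ *ᵥ y) = y := by
      rw [Matrix.mulVec_mulVec, Matrix.mul_nonsing_inv A hA, Matrix.one_mulVec]
    have hψinv : ψ (A⁻¹ *ᵥ y) = ψ y := by rw [← hψ, hAinv]
    have hφinv : φ (A⁻¹ *ᵥ y) = φ y - ψ y := by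
      rw [← hψinv]
      exact eq_sub_of_add_eq (by rw [← hφ, hAinv])
    rw [Matrix.zpow_sub_one hA, ← Matrix.mulVec_mulVec, ih, hφinv, hψinv, sub_smul, one_smul]
    abel

end AffineDrift

theorem Int.existsUnique_pos_and_succ_neg_of_affine {K : Type*} [Field K] [LinearOrder K]
    [IsStrictOrderedRing K] [FloorRing K] {g : ℤ → K} {a b : K} (hb : 0 < b)
    (hg : ∀ n, g n = a - n * b) (hne : ∀ n, g n ≠ 0) :
    ∃! n, 0 < g n ∧ g (n + 1) < 0 := by
  have key : ∀ n : ℤ, (0 < g n ∧ g (n + 1) < 0) ↔ n = ⌊a / b⌋ := by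
    intro n
    have hn : (n : K) ≠ a / b := fun h ↦ hne n (by rw [hg, h, div_mul_cancel₀ a hb.ne', sub_self])
    rw [eq_comm, Int.floor_eq_iff, hg, hg, sub_pos, sub_neg, ← lt_div_iff₀ hb,
      ← div_lt_iff₀ hb, Int.cast_add, Int.cast_one]
    exact ⟨fun h ↦ ⟨h.1.le, h.2⟩, fun h ↦ ⟨h.1.lt_of_ne hn, h.2⟩⟩
  simpa only [key] using existsUnique_eq

lemma M_det : M.det = 1 := by
  simp only [M, det_fin_three, of_apply, cons_val', cons_val_zero, cons_val_fin_one, cons_val_one,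
    cons_val]
  norm_num

lemma sub_mulVec_M (y : Fin 3 → ℝ) : (M *ᵥ y) 0 - (M *ᵥ y) 2 = y 0 - y 2 := by
  simp only [mulVec, dotProduct, M, of_apply, cons_val', cons_val_fin_one, cons_val_zero,
    Fin.sum_univ_three, cons_val_one, cons_val]
  ring

lemma interForm_mulVec_M_c (y : Fin 3 → ℝ) :
    interForm (M *ᵥ y) c = interForm y c + -4 * (y 0 - y 2) := by
  simp only [interForm, mulVec, dotProduct, M, of_apply, cons_val', cons_val_fin_one,
    cons_val_zero, Fin.sum_univ_three, cons_val_one, cons_val, c]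
  ring

lemma interForm_zpow_mulVec_M_c (n : ℤ) (x : Fin 3 → ℝ) :
    interForm (M ^ n *ᵥ x) c = interForm x c - n * (4 * (x 0 - x 2)) := by
  have hψ (y : Fin 3 → ℝ) : -4 * ((M *ᵥ y) 0 - (M *ᵥ y) 2) = -4 * (y 0 - y 2) := by
    rw [sub_mulVec_M]
  rw [apply_zpow_mulVec_of_apply_mulVec (φ := (interForm · c)) (M_det ▸ isUnit_one) hψ
    interForm_mulVec_M_c, zsmul_eq_mul]
  ring

lemma sub_pos_of_interForm_self_pos {x : Fin 3 → ℝ} (hx : 0 < interForm x x) (hx0 : 0 < x 0) :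
    0 < x 0 - x 2 := by
  unfold interForm at hx
  nlinarith [sq_nonneg (x 1), sq_nonneg (x 0 + x 2)]

/-- For a generic starting point on the hyperboloid, there is a unique `n` for which the
`n`-th iterate under the parabolic transformation `M` lies on the positive side of the wall
`W = {ω : B(ω,ω) = 1, ω₁ > 0, B(ω,c) = 0}` and the `(n+1)`-st iterate on the negative side. -/
theorem stmt3 (x : Fin 3 → ℝ) (hx : interForm x x = 1) (hx0 : x 0 > 0)
    (hgen : ∀ n : ℤ, interForm ((M ^ n).mulVec x) c ≠ 0) :
    ∃! n : ℤ, interForm ((M ^ n).mulVec x) c > 0 ∧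
      interForm ((M ^ (n + 1)).mulVec x) c < 0 := by
  have hslope : 0 < 4 * (x 0 - x 2) :=
    mul_pos four_pos (sub_pos_of_interForm_self_pos (hx ▸ one_pos) hx0)
  exact Int.existsUnique_pos_and_succ_neg_of_affine hslope
    (fun n ↦ interForm_zpow_mulVec_M_c n x) hgen
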